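/- For all m ∈ ℕ and k ≥ 1, the higher-order q-Bernoulli numbers β^{(k)}_{i,q} = β^{(k)}_{i,q}(0) satisfy Σ_{i=0}^m C(m,i) (q−1)^i β^{(k)}_{i,q} = ( C(m+k,k) / binom(m+k,k)_q ) · ( k!/[k]_q! ). -/

import Mathlib

/-!
With `w(j) = ∏_{l=1}^k (j+l)/[j+l]_q`, the closed formula says that `(q-1)^i β^{(k)}_{i,q}` is the
`i`-th forward difference of `w` at `0`. Newton's forward-difference formula then collapses
`Σ_i C(m,i) Δ^i w(0)` to `w(m)`, the quotient of `(m+1)⋯(m+k) = k! C(m+k,k)` by its q-analogue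
`[m+1]_q⋯[m+k]_q = [k]_q! binom(m+k,k)_q`.
-/

def qnum {K : Type*} [Field K] (q : K) (n : ℕ) : K := (1 - q ^ n) / (1 - q)

def qfact {K : Type*} [Field K] (q : K) (n : ℕ) : K :=
  ∏ j ∈ Finset.range n, qnum q (j + 1)

/-- The Gaussian binomial coefficient, `0` for `k > n`. -/
def qbinom {K : Type*} [Field K] (q : K) (n k : ℕ) : K :=
  if k ≤ n then qfact q n / (qfact q k * qfact q (n - k)) else 0

def qBernoulliNum {K : Type*} [Field K] (q : K) (k i : ℕ) : K :=
  (1 / (1 - q) ^ i) * ∑ j ∈ Finset.range (i + 1),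
    (-1 : K) ^ j * (Nat.choose i j : K) *
      ∏ l ∈ Finset.Icc 1 k, ((j + l : ℕ) : K) / qnum q (j + l)

open Finset fwdDiff

theorem sum_range_neg_one_pow_mul_choose_mul {R : Type*} [CommRing R] (f : ℕ → R) (n : ℕ) :
    ∑ j ∈ range (n + 1), (-1 : R) ^ j * (n.choose j : R) * f j = (-1) ^ n * (Δ_[1] ^[n] f 0) := by
  rw [fwdDiff_iter_eq_sum_shift, mul_sum]
  refine sum_congr rfl fun j hj => ?_
  obtain ⟨d, rfl⟩ := Nat.exists_eq_add_of_le (mem_range_succ_iff.mp hj)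
  simp only [zsmul_eq_mul, zero_add, nsmul_one, Nat.add_sub_cancel_left, Int.cast_mul,
    Int.cast_pow, Int.cast_neg, Int.cast_one, Int.cast_natCast, Nat.cast_id, pow_add]
  have hd : (-1 : R) ^ d * (-1) ^ d = 1 := by rw [← mul_pow]; simp
  linear_combination (-(-1 : R) ^ j * ((j + d).choose j : R) * f j) * hd

theorem prod_Icc_one_eq_prod_range {M : Type*} [CommMonoid M] (f : ℕ → M) (k : ℕ) :
    ∏ l ∈ Icc 1 k, f l = ∏ i ∈ range k, f (i + 1) := by
  rw [← Ico_add_one_right_eq_Icc, prod_Ico_eq_prod_range]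
  simp [add_comm]

section QAnalogues

variable {K : Type*} [Field K] {q : K}

theorem qnum_ne_zero (hq1 : q ≠ 1) {n : ℕ} (hn : q ^ n ≠ 1) : qnum q n ≠ 0 :=
  div_ne_zero (sub_ne_zero.2 hn.symm) (sub_ne_zero.2 hq1.symm)

theorem qfact_ne_zero (hq : ∀ n : ℕ, 1 ≤ n → q ^ n ≠ 1) (n : ℕ) : qfact q n ≠ 0 :=
  prod_ne_zero_iff.2 fun j _ ↦
    qnum_ne_zero (by simpa using hq 1 le_rfl) (hq (j + 1) (Nat.le_add_left 1 j))

theorem qfact_add (q : K) (m k : ℕ) :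
    qfact q (m + k) = qfact q m * ∏ i ∈ range k, qnum q (m + i + 1) :=
  prod_range_add _ m k

theorem qbinom_add_mul_qfact (hq : ∀ n : ℕ, 1 ≤ n → q ^ n ≠ 1) (m k : ℕ) :
    qbinom q (m + k) k * qfact q k = ∏ i ∈ range k, qnum q (m + i + 1) := by
  rw [qbinom, if_pos (Nat.le_add_left k m), Nat.add_sub_cancel, qfact_add]
  field_simp [qfact_ne_zero hq]

def qBernoulliWeight (q : K) (k j : ℕ) : K :=
  ∏ l ∈ Icc 1 k, ((j + l : ℕ) : K) / qnum q (j + l)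

theorem qBernoulliWeight_eq_prod_range (q : K) (k j : ℕ) :
    qBernoulliWeight q k j = ∏ i ∈ range k, ((j + i + 1 : ℕ) : K) / qnum q (j + i + 1) :=
  prod_Icc_one_eq_prod_range _ k

theorem qBernoulliNum_eq_sum_qBernoulliWeight (q : K) (k i : ℕ) :
    qBernoulliNum q k i =
      1 / (1 - q) ^ i * ∑ j ∈ range (i + 1), (-1) ^ j * (i.choose j : K) * qBernoulliWeight q k j :=
  rfl

theorem sub_one_pow_mul_qBernoulliNum (hq1 : q ≠ 1) (k i : ℕ) :
    (q - 1) ^ i * qBernoulliNum q k i = Δ_[1] ^[i] (qBernoulliWeight q k) 0 := by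
  have hsign : (q - 1) ^ i = (-1) ^ i * (1 - q) ^ i := by rw [← mul_pow, neg_one_mul, neg_sub]
  have hpow : (1 - q) ^ i ≠ 0 := pow_ne_zero i (sub_ne_zero.2 hq1.symm)
  rw [qBernoulliNum_eq_sum_qBernoulliWeight, sum_range_neg_one_pow_mul_choose_mul, hsign]
  field_simp
  rw [← pow_mul, pow_mul', neg_one_sq, one_pow, one_mul]

theorem qBernoulliWeight_eq_choose_div_qbinom (hq : ∀ n : ℕ, 1 ≤ n → q ^ n ≠ 1) (m k : ℕ) :
    qBernoulliWeight q k m =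
      ((m + k).choose k / qbinom q (m + k) k) * (k.factorial / qfact q k) := by
  rw [qBernoulliWeight_eq_prod_range, prod_div_distrib, div_mul_div_comm,
    qbinom_add_mul_qfact hq, ← Nat.cast_mul, mul_comm, ← Nat.ascFactorial_eq_factorial_mul_choose,
    Nat.ascFactorial_eq_prod_range, Nat.cast_prod]
  simp [add_right_comm]

end QAnalogues

theorem sum_choose_qBernoulliNum_general
    {K : Type*} [Field K] (q : K)
    (hq : ∀ n : ℕ, 1 ≤ n → q ^ n ≠ 1) (m k : ℕ) :
    ∑ i ∈ Finset.range (m + 1), (Nat.choose m i : K) * (q - 1) ^ i * qBernoulliNum q k i =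
      ((Nat.choose (m + k) k : K) / qbinom q (m + k) k) *
        ((Nat.factorial k : K) / qfact q k) := by
  have hq1 : q ≠ 1 := by simpa using hq 1 le_rfl
  calc ∑ i ∈ range (m + 1), (m.choose i : K) * (q - 1) ^ i * qBernoulliNum q k i
      = ∑ i ∈ range (m + 1), m.choose i • Δ_[1] ^[i] (qBernoulliWeight q k) 0 := by
        simp only [mul_assoc, sub_one_pow_mul_qBernoulliNum hq1, nsmul_eq_mul]
    _ = qBernoulliWeight q k m := by
        simpa using (shift_eq_sum_fwdDiff_iter 1 (qBernoulliWeight q k) m 0).symm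
    _ = _ := qBernoulliWeight_eq_choose_div_qbinom hq m k

/-- The higher-order q-Bernoulli numbers satisfy
`Σ_{i=0}^m C(m,i)(q-1)^i β^{(k)}_{i,q} = (C(m+k,k)/binom(m+k,k)_q)(k!/[k]_q!)`. -/
theorem sum_choose_qBernoulliNum
    {K : Type*} [Field K] [CharZero K] (q : K) (hq0 : q ≠ 0)
    (hq : ∀ n : ℕ, 1 ≤ n → q ^ n ≠ 1) (m k : ℕ) (hk : 1 ≤ k) :
    ∑ i ∈ Finset.range (m + 1), (Nat.choose m i : K) * (q - 1) ^ i * qBernoulliNum q k i =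
      ((Nat.choose (m + k) k : K) / qbinom q (m + k) k) *
        ((Nat.factorial k : K) / qfact q k) :=
  sum_choose_qBernoulliNum_general q hq m k
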